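/- arXiv:2009.13686 — 4 statements merged into one kernel-verified Lean document; each statement's English description precedes it below -/
import Mathlib

section
/- Let 𝓘 be an analytic tall ideal on ω (viewed as a subset of 2^ω via characteristic functions). Then there exists an F_σ tall ideal 𝓙 on ω with 𝓙 ⊆ 𝓘. -/
open MeasureTheory

/-- An ideal on a countable set `α` (subsets identified with characteristic functions):
closed under unions and subsets, contains all finite sets, does not contain the whole set. -/
def IsIdealOn {α : Type*} (I : Set (α → Bool)) : Prop :=
  (∀ x y : α → Bool, x ∈ I → y ∈ I → (fun n => x n || y n) ∈ I) ∧
  (∀ x y : α → Bool, y ∈ I → (∀ n, x n = true → y n = true) → x ∈ I) ∧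
  (∀ x : α → Bool, {n | x n = true}.Finite → x ∈ I) ∧
  (fun _ => true) ∉ I

/-- A family `H` of subsets of `α` is tall if every infinite subset of `α`
contains an infinite member of `H`. -/
def IsTall {α : Type*} (H : Set (α → Bool)) : Prop :=
  ∀ x : α → Bool, {n | x n = true}.Infinite →
    ∃ y ∈ H, {n | y n = true}.Infinite ∧ ∀ n, y n = true → x n = true

/-- A set is `F_σ` if it is a countable union of closed sets. -/
def IsFsigma {X : Type*} [TopologicalSpace X] (S : Set X) : Prop :=
  ∃ C : ℕ → Set X, (∀ n, IsClosed (C n)) ∧ S = ⋃ n, C n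

open Filter Topology Set

noncomputable section

/-- next element of `y` above `j` -/
def nxt (y : ℕ → Bool) (j : ℕ) : ℕ := sInf {a | j < a ∧ y a = true}

/-- second element of `y` above `j` -/
def psi (y : ℕ → Bool) (j : ℕ) : ℕ := nxt y (nxt y j)

lemma infinite_exists_gt {y : ℕ → Bool} (h : {n | y n = true}.Infinite) (j : ℕ) :
    ∃ a, j < a ∧ y a = true := by
  obtain ⟨b, hb, hbj⟩ := h.exists_gt j
  exact ⟨b, hbj, hb⟩

lemma nxt_spec {y : ℕ → Bool} {j : ℕ} (h : ∃ a, j < a ∧ y a = true) :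
    j < nxt y j ∧ y (nxt y j) = true :=
  Nat.sInf_mem (s := {a | j < a ∧ y a = true}) h

lemma nxt_le {y : ℕ → Bool} {j a : ℕ} (ha : j < a) (hya : y a = true) : nxt y j ≤ a :=
  Nat.sInf_le ⟨ha, hya⟩

lemma nxt_eq_of {y : ℕ → Bool} {j b : ℕ} (hb : j < b) (hyb : y b = true)
    (hmin : ∀ a, j < a → y a = true → b ≤ a) : nxt y j = b := by
  have h1 := nxt_spec (y := y) (j := j) ⟨b, hb, hyb⟩
  exact le_antisymm (nxt_le hb hyb) (hmin _ h1.1 h1.2)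

lemma psi_spec {y : ℕ → Bool} (h : {n | y n = true}.Infinite) (j : ℕ) :
    j < nxt y j ∧ y (nxt y j) = true ∧ nxt y j < psi y j ∧ y (psi y j) = true := by
  have h1 := nxt_spec (infinite_exists_gt h j)
  have h2 := nxt_spec (infinite_exists_gt h (nxt y j))
  exact ⟨h1.1, h1.2, h2.1, h2.2⟩

/-- stability of psi under agreement of initial segments -/
lemma psi_stable {y y' : ℕ → Bool} {j : ℕ} (hy : {n | y n = true}.Infinite)
    (hagree : ∀ m, m ≤ psi y j → y' m = y m) : psi y' j = psi y j := by
  obtain ⟨h1, h2, h3, h4⟩ := psi_spec hy j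
  have hn1 : nxt y' j = nxt y j := by
    apply nxt_eq_of h1
    · rw [hagree _ (le_of_lt h3)]; exact h2
    · intro a ha hya
      rcases le_or_gt a (psi y j) with hle | hlt
      · exact nxt_le ha (by rw [← hagree _ hle]; exact hya)
      · exact le_trans (le_of_lt h3) (le_of_lt hlt)
  have hn2 : nxt y' (nxt y j) = psi y j := by
    apply nxt_eq_of h3
    · rw [hagree _ le_rfl]; exact h4
    · intro a ha hya
      rcases le_or_gt a (psi y j) with hle | hlt
      · exact nxt_le ha (by rw [← hagree _ hle]; exact hya)
      · exact le_of_lt hlt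
  rw [psi, hn1, hn2]

/-- the basic closed-generating family -/
def C0 (f : (ℕ → ℕ) → (ℕ → Bool)) : Set (ℕ → Bool) :=
  {y | {n | y n = true}.Infinite ∧
    ∃ w : ℕ → ℕ, (∀ n, y n = true → f w n = true) ∧ ∀ j, w j ≤ psi y j}

/-- auxiliary recursive sequence -/
def seqA (c : ℕ → ℕ) (w : ℕ → ℕ) : ℕ → ℕ
  | 0 => c 0
  | i + 1 => c (max (seqA c w i) ((Finset.range (seqA c w i + 1)).sup w))

lemma seqA_strictMono {c w : ℕ → ℕ} (hc : ∀ m, m < c m) : StrictMono (seqA c w) := by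
  apply strictMono_nat_of_lt_succ
  intro i
  calc seqA c w i ≤ max (seqA c w i) ((Finset.range (seqA c w i + 1)).sup w) := le_max_left _ _
    _ < _ := hc _

/-- tallness of C0 -/
lemma C0_tall {I : Set (ℕ → Bool)} {f : (ℕ → ℕ) → (ℕ → Bool)} (hf : range f = I)
    (hTall : IsTall I) (x : ℕ → Bool) (hx : {n | x n = true}.Infinite) :
    ∃ y ∈ C0 f, {n | y n = true}.Infinite ∧ ∀ n, y n = true → x n = true := by
  obtain ⟨y₁, hy₁I, hy₁inf, hy₁x⟩ := hTall x hx
  obtain ⟨w₁, hw₁⟩ : ∃ w₁, f w₁ = y₁ := by rw [← hf] at hy₁I; exact hy₁I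
  have hex : ∀ m : ℕ, ∃ b, m < b ∧ y₁ b = true := infinite_exists_gt hy₁inf
  choose c hc1 hc2 using hex
  set a : ℕ → ℕ := seqA c w₁ with ha
  have hasm : StrictMono a := seqA_strictMono hc1
  have hay₁ : ∀ i, y₁ (a i) = true := by
    intro i; cases i with
    | zero => exact hc2 0
    | succ i => exact hc2 _
  classical
  set y : ℕ → Bool := fun n => if n ∈ Set.range a then true else false with hy
  have hymem : ∀ n, y n = true ↔ n ∈ Set.range a := by
    intro n; simp [hy]
  have hyinf : {n | y n = true}.Infinite := by
    have : {n | y n = true} = Set.range a := by ext n; simp [hymem]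
    rw [this]
    exact Set.infinite_range_of_injective hasm.injective
  -- nxt computations
  have hnxt : ∀ j : ℕ, ∃ i, nxt y j = a i ∧ j < a i ∧ nxt y (a i) = a (i + 1) := by
    intro j
    have hPex : ∃ i, j < a i := ⟨j + 1, lt_of_lt_of_le (Nat.lt_succ_self j) (hasm.le_apply)⟩
    set i₀ := Nat.find hPex with hi₀
    have hji₀ : j < a i₀ := Nat.find_spec hPex
    have h1 : nxt y j = a i₀ := by
      apply nxt_eq_of hji₀ ((hymem _).2 ⟨i₀, rfl⟩)
      intro b hb hyb
      obtain ⟨i', rfl⟩ := (hymem b).1 hyb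
      have : i₀ ≤ i' := by
        by_contra h
        exact absurd hb (Nat.find_min hPex (lt_of_not_ge h))
      exact hasm.monotone this
    have h2 : nxt y (a i₀) = a (i₀ + 1) := by
      apply nxt_eq_of (hasm (Nat.lt_succ_self i₀)) ((hymem _).2 ⟨i₀ + 1, rfl⟩)
      intro b hb hyb
      obtain ⟨i', rfl⟩ := (hymem b).1 hyb
      have : i₀ < i' := hasm.lt_iff_lt.1 hb
      exact hasm.monotone this
    exact ⟨i₀, h1, hji₀, h2⟩
  refine ⟨y, ⟨hyinf, w₁, ?_, ?_⟩, hyinf, ?_⟩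
  · intro n hn
    obtain ⟨i, rfl⟩ := (hymem n).1 hn
    rw [hw₁]; exact hay₁ i
  · intro j
    obtain ⟨i, h1, h2, h3⟩ := hnxt j
    have hpsi : psi y j = a (i + 1) := by rw [psi, h1, h3]
    rw [hpsi]
    refine le_of_lt ?_
    have : w₁ j ≤ (Finset.range (a i + 1)).sup w₁ :=
      Finset.le_sup (Finset.mem_range.2 (lt_of_lt_of_le h2 (Nat.le_succ _)))
    calc w₁ j ≤ max (a i) ((Finset.range (a i + 1)).sup w₁) :=
          le_trans this (le_max_right _ _)
      _ < c _ := hc1 _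
      _ = a (i + 1) := rfl
  · intro n hn
    obtain ⟨i, rfl⟩ := (hymem n).1 hn
    exact hy₁x _ (hay₁ i)

/-- the closure of C0 is contained in I -/
lemma closure_C0_subset {I : Set (ℕ → Bool)} {f : (ℕ → ℕ) → (ℕ → Bool)}
    (hf : range f = I) (hcont : Continuous f) (hIdeal : IsIdealOn I) :
    closure (C0 f) ⊆ I := by
  intro y hy
  obtain ⟨u, hu, hulim⟩ := mem_closure_iff_seq_limit.1 hy
  by_cases hfin : {n | y n = true}.Finite
  · exact hIdeal.2.2.1 y hfin
  have hyinf : {n | y n = true}.Infinite := hfin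
  have huinf : ∀ k, {n | u k n = true}.Infinite := fun k => (hu k).1
  choose w hw1 hw2 using fun k => (hu k).2
  -- eventual agreement of coordinates
  have hptw : ∀ m, ∀ᶠ k in atTop, u k m = y m := by
    intro m
    have := tendsto_pi_nhds.1 hulim m
    rw [nhds_discrete Bool] at this
    exact tendsto_pure.1 this
  have hev : ∀ j, ∀ᶠ k in atTop, psi (u k) j = psi y j := by
    intro j
    have h1 : ∀ᶠ k in atTop, ∀ m ∈ Set.Iic (psi y j), u k m = y m := by
      rw [eventually_all_finite (Set.finite_Iic _)]
      intro m _; exact hptw m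
    filter_upwards [h1] with k hk
    exact psi_stable hyinf (fun m hm => hk m hm)
  have hevN : ∀ j, ∃ N, ∀ k, N ≤ k → psi (u k) j = psi y j := by
    intro j; exact eventually_atTop.1 (hev j)
  choose N hN using hevN
  set B : ℕ → ℕ := fun j => max (psi y j) ((Finset.range (N j)).sup fun k => psi (u k) j)
    with hB
  have hwB : ∀ k j, w k j ≤ B j := by
    intro k j
    refine le_trans (hw2 k j) ?_
    show psi (u k) j ≤ max (psi y j) ((Finset.range (N j)).sup fun k => psi (u k) j)
    rcases lt_or_ge k (N j) with h | h
    · have h1 : psi (u k) j ≤ (Finset.range (N j)).sup (fun k => psi (u k) j) :=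
        Finset.le_sup (f := fun k => psi (u k) j) (Finset.mem_range.2 h)
      exact le_trans h1 (le_max_right _ _)
    · rw [hN j k h]; exact le_max_left _ _
  have hK : IsCompact (Set.pi Set.univ fun j => Set.Iic (B j)) :=
    isCompact_univ_pi fun j => (Set.finite_Iic (B j)).isCompact
  have hmemK : ∀ k, w k ∈ Set.pi Set.univ fun j => Set.Iic (B j) := by
    intro k; intro j _; exact hwB k j
  obtain ⟨wstar, _, φ, hφ, hwlim⟩ := hK.tendsto_subseq hmemK
  have hfw : f wstar ∈ I := by rw [← hf]; exact ⟨wstar, rfl⟩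
  apply hIdeal.2.1 y (f wstar) hfw
  intro n hn
  -- f (w (φ k)) n eventually equals f wstar n
  have h2 : Tendsto (fun k => f (w (φ k)) n) atTop (𝓝 (f wstar n)) :=
    (tendsto_pi_nhds.1 ((hcont.tendsto wstar).comp hwlim) n)
  rw [nhds_discrete Bool] at h2
  have h2' : ∀ᶠ k in atTop, f (w (φ k)) n = f wstar n := tendsto_pure.1 h2
  have h1 : ∀ᶠ k in atTop, u (φ k) n = true := by
    filter_upwards [hφ.tendsto_atTop.eventually (hptw n)] with k hk
    rw [hk, hn]
  obtain ⟨k, hk1, hk2⟩ := (h1.and h2').exists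
  rw [← hk2]
  exact hw1 (φ k) n hk1

/-- the finite-union closed pieces -/
def Dset (C : Set (ℕ → Bool)) (k n : ℕ) : Set (ℕ → Bool) :=
  {z | ∃ g : Fin k → (ℕ → Bool), (∀ i, g i ∈ C) ∧
    ∀ m, z m = true → m < n ∨ ∃ i, g i m = true}

lemma isClosed_Dset {C : Set (ℕ → Bool)} (hC : IsClosed C) (k n : ℕ) :
    IsClosed (Dset C k n) := by
  set S : Set ((ℕ → Bool) × (Fin k → ℕ → Bool)) :=
    {p | (∀ i, p.2 i ∈ C) ∧ ∀ m, p.1 m = true → m < n ∨ ∃ i, p.2 i m = true} with hS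
  have hSclosed : IsClosed S := by
    have e : S = (⋂ i, {p : (ℕ → Bool) × (Fin k → ℕ → Bool) | p.2 i ∈ C}) ∩
        ⋂ m, {p : (ℕ → Bool) × (Fin k → ℕ → Bool) |
          p.1 m = true → m < n ∨ ∃ i, p.2 i m = true} := by
      ext p
      simp only [hS, Set.mem_setOf_eq, Set.mem_inter_iff, Set.mem_iInter]
    rw [e]
    apply IsClosed.inter
    · apply isClosed_iInter
      intro i
      have hcont2 : Continuous fun p : (ℕ → Bool) × (Fin k → ℕ → Bool) => p.2 i :=
        (continuous_apply i).comp continuous_snd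
      exact hC.preimage hcont2
    · apply isClosed_iInter
      intro m
      by_cases hm : m < n
      · have : {p : (ℕ → Bool) × (Fin k → ℕ → Bool) |
            p.1 m = true → m < n ∨ ∃ i, p.2 i m = true} = Set.univ := by
          ext p; simp [hm]
        rw [this]; exact isClosed_univ
      · have : {p : (ℕ → Bool) × (Fin k → ℕ → Bool) |
            p.1 m = true → m < n ∨ ∃ i, p.2 i m = true} =
            {p : (ℕ → Bool) × (Fin k → ℕ → Bool) | p.1 m = false} ∪
            ⋃ i, {p : (ℕ → Bool) × (Fin k → ℕ → Bool) | p.2 i m = true} := by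
          ext p
          simp only [Set.mem_setOf_eq, Set.mem_union, Set.mem_iUnion, hm, false_or]
          constructor
          · intro h
            cases hpb : p.1 m with
            | false => exact Or.inl rfl
            | true => exact Or.inr (h hpb)
          · rintro (h | h) h'
            · rw [h'] at h; exact absurd h (by simp)
            · exact h
        rw [this]
        apply IsClosed.union
        · have hcont1 : Continuous fun p : (ℕ → Bool) × (Fin k → ℕ → Bool) => p.1 m :=
            (continuous_apply m).comp continuous_fst
          exact isClosed_eq hcont1 continuous_const
        · apply isClosed_iUnion_of_finite
          intro i
          have hcont2 : Continuous fun p : (ℕ → Bool) × (Fin k → ℕ → Bool) => p.2 i m :=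
            (continuous_apply m).comp ((continuous_apply i).comp continuous_snd)
          exact isClosed_eq hcont2 continuous_const
  have himg : Dset C k n = Prod.fst '' S := by
    ext z
    constructor
    · rintro ⟨g, hg1, hg2⟩; exact ⟨(z, g), ⟨hg1, hg2⟩, rfl⟩
    · rintro ⟨⟨z', g⟩, ⟨hg1, hg2⟩, rfl⟩; exact ⟨g, hg1, hg2⟩
  rw [himg]
  exact ((hSclosed.isCompact).image continuous_fst).isClosed

lemma Dset_mono {C : Set (ℕ → Bool)} (c₀ : ℕ → Bool) (hc₀ : c₀ ∈ C) {k k' n n' : ℕ}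
    (hk : k ≤ k') (hn : n ≤ n') : Dset C k n ⊆ Dset C k' n' := by
  rintro z ⟨g, hg1, hg2⟩
  classical
  refine ⟨fun i => if h : (i : ℕ) < k then g ⟨i, h⟩ else c₀, ?_, ?_⟩
  · intro i
    by_cases h : (i : ℕ) < k
    · simp only [dif_pos h]; exact hg1 _
    · simp only [dif_neg h]; exact hc₀
  · intro m hm
    rcases hg2 m hm with h | ⟨i, hi⟩
    · exact Or.inl (lt_of_lt_of_le h hn)
    · refine Or.inr ⟨⟨i, lt_of_lt_of_le i.2 hk⟩, ?_⟩
      simp only [dif_pos i.2]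
      exact hi


/-- Every analytic tall ideal on ω contains an `F_σ` tall ideal. -/
theorem analytic_tall_ideal_contains_Fsigma_tall_ideal
    (I : Set (ℕ → Bool)) (hIdeal : IsIdealOn I) (hAnalytic : AnalyticSet I)
    (hTall : IsTall I) :
    ∃ J : Set (ℕ → Bool), IsIdealOn J ∧ IsFsigma J ∧ IsTall J ∧ J ⊆ I := by

  classical
  rw [MeasureTheory.AnalyticSet] at hAnalytic
  have hne : I ≠ ∅ := by
    intro h
    have hmem : (fun _ => false : ℕ → Bool) ∈ I := hIdeal.2.2.1 _ (by simp)
    rw [h] at hmem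
    exact hmem
  rcases hAnalytic with h | ⟨f, hcont, hf⟩
  · exact absurd h hne
  set C : Set (ℕ → Bool) := closure (C0 f) with hC
  have hCclosed : IsClosed C := isClosed_closure
  have hCI : C ⊆ I := closure_C0_subset hf hcont hIdeal
  -- C is nonempty
  have htrue_inf : {n | (fun _ => true : ℕ → Bool) n = true}.Infinite := by
    simp [Set.infinite_univ]
  obtain ⟨c₀, hc₀C0, _, _⟩ := C0_tall hf hTall (fun _ => true) htrue_inf
  have hc₀ : c₀ ∈ C := subset_closure hc₀C0
  set J : Set (ℕ → Bool) := ⋃ m, Dset C m m with hJ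
  have hJI : J ⊆ I := by
    rintro z hz
    obtain ⟨m, hm⟩ := Set.mem_iUnion.1 hz
    obtain ⟨g, hg1, hg2⟩ := hm
    -- the union of the g i's together with [0,m) is in I
    have hU : ∀ (k : ℕ) (g : Fin k → (ℕ → Bool)), (∀ i, g i ∈ I) →
        (fun l => decide (∃ i, g i l = true)) ∈ I := by
      intro k
      induction k with
      | zero =>
        intro g _
        apply hIdeal.2.2.1
        have : {l | (decide (∃ i : Fin 0, g i l = true)) = true} = ∅ := by
          ext l; simp
        rw [this]; exact Set.finite_empty
      | succ k ih =>
        intro g hg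
        have h1 : g 0 ∈ I := hg 0
        have h2 : (fun l => decide (∃ i : Fin k, g i.succ l = true)) ∈ I :=
          ih (fun i => g i.succ) (fun i => hg i.succ)
        have h3 := hIdeal.1 _ _ h1 h2
        have : (fun l => decide (∃ i : Fin (k+1), g i l = true)) =
            (fun l => g 0 l || decide (∃ i : Fin k, g i.succ l = true)) := by
          funext l
          rcases h : g 0 l with _ | _
          · simp only [h, Bool.false_or]
            rw [decide_eq_decide]
            constructor
            · rintro ⟨i, hi⟩
              rcases Fin.eq_zero_or_eq_succ i with rfl | ⟨i', rfl⟩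
              · rw [h] at hi; exact absurd hi (by simp)
              · exact ⟨i', hi⟩
            · rintro ⟨i, hi⟩; exact ⟨i.succ, hi⟩
          · simp only [h, Bool.true_or]
            exact decide_eq_true ⟨0, h⟩
        rw [this]
        exact h3
    have hUg : (fun l => decide (∃ i, g i l = true)) ∈ I :=
      hU m g (fun i => hCI (hg1 i))
    have hfin : (fun l => decide (l < m) : ℕ → Bool) ∈ I := by
      apply hIdeal.2.2.1
      apply Set.Finite.subset (Set.finite_Iio m)
      intro l hl
      simp only [Set.mem_setOf_eq, decide_eq_true_eq] at hl
      exact hl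
    have hUnion := hIdeal.1 _ _ hfin hUg
    apply hIdeal.2.1 z _ hUnion
    intro l hl
    rcases hg2 l hl with h | ⟨i, hi⟩
    · simp [h]
    · have : decide (∃ i, g i l = true) = true := decide_eq_true ⟨i, hi⟩
      simp [this]
  refine ⟨J, ⟨?_, ?_, ?_, ?_⟩, ⟨fun m => Dset C m m, fun m => isClosed_Dset hCclosed m m, rfl⟩,
    ?_, hJI⟩
  · -- union
    rintro x y hx hy
    obtain ⟨m₁, hm₁⟩ := Set.mem_iUnion.1 hx
    obtain ⟨m₂, hm₂⟩ := Set.mem_iUnion.1 hy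
    obtain ⟨g₁, hg₁1, hg₁2⟩ := hm₁
    obtain ⟨g₂, hg₂1, hg₂2⟩ := hm₂
    apply Set.mem_iUnion.2
    refine ⟨m₁ + m₂, Fin.append g₁ g₂, ?_, ?_⟩
    · intro i
      refine Fin.addCases (fun i' => ?_) (fun i' => ?_) i
      · rw [Fin.append_left]; exact hg₁1 i'
      · rw [Fin.append_right]; exact hg₂1 i'
    · intro l hl
      have hor : x l = true ∨ y l = true := by
        have h' : (x l || y l) = true := hl
        simpa using h'
      rcases hor with h | h
      · rcases hg₁2 l h with h' | ⟨i, hi⟩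
        · exact Or.inl (lt_of_lt_of_le h' (Nat.le_add_right _ _))
        · refine Or.inr ⟨Fin.castAdd m₂ i, ?_⟩
          rw [Fin.append_left]; exact hi
      · rcases hg₂2 l h with h' | ⟨i, hi⟩
        · exact Or.inl (lt_of_lt_of_le h' (Nat.le_add_left _ _))
        · refine Or.inr ⟨Fin.natAdd m₁ i, ?_⟩
          rw [Fin.append_right]; exact hi
  · -- subsets
    rintro x y hy hxy
    obtain ⟨m, hm⟩ := Set.mem_iUnion.1 hy
    obtain ⟨g, hg1, hg2⟩ := hm
    apply Set.mem_iUnion.2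
    exact ⟨m, g, hg1, fun l hl => hg2 l (hxy l hl)⟩
  · -- finite sets
    intro x hx
    obtain ⟨b, hb⟩ := hx.bddAbove
    apply Set.mem_iUnion.2
    refine ⟨b + 1, ?_⟩
    apply Dset_mono c₀ hc₀ (Nat.zero_le _) (le_refl _)
    refine ⟨Fin.elim0, fun i => i.elim0, ?_⟩
    intro l hl
    exact Or.inl (Nat.lt_succ_of_le (hb hl))
  · -- proper
    intro h
    exact hIdeal.2.2.2 (hJI h)
  · -- tall
    intro x hx
    obtain ⟨y, hyC0, hyinf, hyx⟩ := C0_tall hf hTall x hx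
    refine ⟨y, ?_, hyinf, hyx⟩
    apply Set.mem_iUnion.2
    refine ⟨1, ?_⟩
    exact ⟨fun _ => y, fun _ => subset_closure hyC0, fun l hl => Or.inr ⟨0, hl⟩⟩
end
end

section
/- Let 𝓘 be an analytic tall ideal on ω. Then there exists a closed set H ⊆ 2^ω such that H ⊆ 𝓘 and H is tall, i.e., for every infinite x ⊆ ω there is an infinite y ∈ H with y ⊆ x. -/
open MeasureTheory

/-- Every analytic tall ideal on ω contains a closed tall subfamily. -/
theorem analytic_tall_ideal_contains_closed_tall_set
    (I : Set (ℕ → Bool)) (hIdeal : IsIdealOn I) (hAnalytic : AnalyticSet I)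
    (hTall : IsTall I) :
    ∃ H : Set (ℕ → Bool), IsClosed H ∧ H ⊆ I ∧ IsTall H := by
  classical
  have hfin : ∀ w : ℕ → Bool, {n | w n = true}.Finite → w ∈ I := hIdeal.2.2.1
  have hsubcl : ∀ x y : ℕ → Bool, y ∈ I → (∀ n, x n = true → y n = true) → x ∈ I :=
    hIdeal.2.1
  have hfalse : (fun _ => false : ℕ → Bool) ∈ I := by
    apply hfin; simp
  rw [AnalyticSet] at hAnalytic
  rcases hAnalytic with hE | ⟨g, hgc, hgr⟩
  · rw [hE] at hfalse; exact absurd hfalse (Set.notMem_empty _)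
  -- the basic family: w together with a witness z for a superset of w,
  -- the witness being dominated by the enumeration of w itself
  set H₀ : Set (ℕ → Bool) :=
    {w | ∃ z : ℕ → ℕ,
      (∀ n k, n < ((Finset.range k).filter (fun m => w m = true)).card → z n ≤ k) ∧
      (∀ m, w m = true → g z m = true)} with hH₀def
  have hgI : ∀ z, g z ∈ I := fun z => by
    rw [← hgr]; exact Set.mem_range_self z
  refine ⟨closure H₀, isClosed_closure, ?_, ?_⟩
  · -- closure H₀ ⊆ I
    intro y hy
    by_cases hyf : {n | y n = true}.Finite
    · exact hfin y hyf
    have hyi : (setOf (fun m => y m = true)).Infinite := hyf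
    -- approximations from the closure
    have happ : ∀ P : ℕ, ∃ w, w ∈ H₀ ∧ ∀ m < P, w m = y m := by
      intro P
      have hUeq : {w : ℕ → Bool | ∀ m < P, w m = y m}
          = ⋂ m ∈ Finset.range P, {w : ℕ → Bool | w m = y m} := by
        ext w; simp [Finset.mem_range]
      have hUo : IsOpen {w : ℕ → Bool | ∀ m < P, w m = y m} := by
        rw [hUeq]
        refine isOpen_biInter_finset (fun m _ => ?_)
        show IsOpen ((fun w : ℕ → Bool => w m) ⁻¹' {y m})
        exact (continuous_apply m).isOpen_preimage _ (isOpen_discrete _)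
      have hyU : y ∈ {w : ℕ → Bool | ∀ m < P, w m = y m} := fun m _ => rfl
      rcases (mem_closure_iff.1 hy) _ hUo hyU with ⟨w, hwU, hwH⟩
      exact ⟨w, hwH, hwU⟩
    choose ys hysH hagree using happ
    choose zs hbd hsub using hysH
    set p : ℕ → Prop := fun m => y m = true with hpdef
    set N : ℕ → ℕ := fun n => Nat.nth p n + 1 with hNdef
    -- the witnesses are eventually coordinatewise bounded
    have hcard : ∀ n, n < ((Finset.range (N n)).filter (fun m => y m = true)).card := by
      intro n
      have himsub : (Finset.range (n+1)).image (Nat.nth p)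
          ⊆ (Finset.range (N n)).filter (fun m => y m = true) := by
        intro a ha
        rcases Finset.mem_image.1 ha with ⟨i, hi, rfl⟩
        rw [Finset.mem_range] at hi
        refine Finset.mem_filter.2 ⟨Finset.mem_range.2 ?_, ?_⟩
        · have h1 : Nat.nth p i ≤ Nat.nth p n :=
            (Nat.nth_strictMono hyi).monotone (Nat.lt_succ_iff.1 hi)
          show Nat.nth p i < Nat.nth p n + 1
          omega
        · exact Nat.nth_mem_of_infinite hyi i
      have hcardim : ((Finset.range (n+1)).image (Nat.nth p)).card = n + 1 := by
        rw [Finset.card_image_of_injective _ (Nat.nth_strictMono hyi).injective,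
          Finset.card_range]
      have := Finset.card_le_card himsub
      omega
    have hbd' : ∀ n P, N n ≤ P → zs P n ≤ N n := by
      intro n P hNP
      apply hbd P n (N n)
      have hfeq : (Finset.range (N n)).filter (fun m => ys P m = true)
          = (Finset.range (N n)).filter (fun m => y m = true) := by
        apply Finset.filter_congr
        intro m hm
        rw [Finset.mem_range] at hm
        rw [hagree P m (lt_of_lt_of_le hm hNP)]
      rw [hfeq]
      exact hcard n
    set B : ℕ → ℕ := fun n => max (N n) ((Finset.range (N n)).sup fun P => zs P n)
      with hBdef
    have hzB : ∀ P n, zs P n ≤ B n := by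
      intro P n
      simp only [hBdef]
      rcases lt_or_ge P (N n) with h | h
      · exact le_trans (Finset.le_sup (f := fun P => zs P n) (Finset.mem_range.2 h))
          (le_max_right _ _)
      · exact le_trans (hbd' n P h) (le_max_left _ _)
    -- compactness: extract a cluster witness
    set K : Set (ℕ → ℕ) := Set.pi Set.univ (fun n => Set.Iic (B n)) with hKdef
    have hKc : IsCompact K :=
      isCompact_univ_pi (fun n => (Set.finite_Iic (B n)).isCompact)
    have hzsK : ∀ P, zs P ∈ K := fun P => by
      intro n _
      exact hzB P n
    have hmapKle : Filter.map zs Filter.atTop ≤ Filter.principal K := by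
      rw [Filter.le_principal_iff, Filter.mem_map]
      exact Filter.Eventually.of_forall hzsK
    obtain ⟨z, hzK, hzcl⟩ := hKc.exists_clusterPt hmapKle
    have hmcp : MapClusterPt z Filter.atTop zs := hzcl
    -- conclude y ⊆ g z
    have hysub : ∀ m, y m = true → g z m = true := by
      intro m hm
      have hUo : {w : ℕ → ℕ | g w m = g z m} ∈ nhds z := by
        refine IsOpen.mem_nhds ?_ rfl
        exact ((continuous_apply m).comp hgc).isOpen_preimage {g z m} (isOpen_discrete _)
      have hfr := (mapClusterPt_iff_frequently.1 hmcp) _ hUo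
      have hcomb := hfr.and_eventually (Filter.eventually_ge_atTop (m+1))
      rcases hcomb.exists with ⟨P, hPU, hPm⟩
      have : ys P m = true := by rw [hagree P m (by omega)]; exact hm
      have := hsub P m this
      rw [hPU] at this
      exact this
    exact hsubcl y (g z) (hgI z) hysub
  · -- tallness
    intro x hx
    obtain ⟨y₀, hy₀I, hy₀inf, hy₀sub⟩ := hTall x hx
    obtain ⟨z₀, hz₀⟩ : y₀ ∈ Set.range g := by rw [hgr]; exact hy₀I
    set p₀ : ℕ → Prop := fun m => y₀ m = true with hp₀def
    have hp₀i : (setOf p₀).Infinite := hy₀inf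
    -- a strictly monotone index sequence dominating z₀
    set F : ℕ → ℕ := fun n => Nat.rec (z₀ 0) (fun n ih => max (z₀ (n+1)) (ih + 1)) n
      with hFdef
    have hFmono : StrictMono F := by
      apply strictMono_nat_of_lt_succ
      intro n
      have : F (n+1) = max (z₀ (n+1)) (F n + 1) := rfl
      omega
    have hFz : ∀ n, z₀ n ≤ F n := by
      intro n
      cases n with
      | zero => exact le_refl _
      | succ n =>
        have : F (n+1) = max (z₀ (n+1)) (F n + 1) := rfl
        omega
    set a : ℕ → ℕ := fun n => Nat.nth p₀ (F n) with hadef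
    have hamono : StrictMono a := (Nat.nth_strictMono hp₀i).comp hFmono
    have haz : ∀ n, z₀ n ≤ a n := fun n =>
      le_trans (hFz n) ((Nat.nth_strictMono hp₀i).le_apply)
    have hay₀ : ∀ n, y₀ (a n) = true := fun n => Nat.nth_mem_of_infinite hp₀i (F n)
    set y : ℕ → Bool := fun m => if ∃ n, a n = m then true else false with hydef
    have hymem : ∀ m, y m = true ↔ ∃ n, a n = m := by
      intro m
      constructor
      · intro h
        by_contra hc
        rw [hydef] at h
        simp only [if_neg hc] at h
        exact absurd h Bool.false_ne_true
      · intro h; rw [hydef]; simp only [if_pos h]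
    have hyy₀ : ∀ m, y m = true → y₀ m = true := by
      intro m hm
      rcases (hymem m).1 hm with ⟨n, rfl⟩
      exact hay₀ n
    have hyH₀ : y ∈ H₀ := by
      refine ⟨z₀, ?_, ?_⟩
      · intro n k hn
        -- if the count of y below k exceeds n then a n < k
        by_contra hzk
        push_neg at hzk
        have hak : k ≤ a n := le_trans (le_of_lt hzk) (haz n)
        have hsubim : (Finset.range k).filter (fun m => y m = true)
            ⊆ (Finset.range n).image a := by
          intro m hm
          rcases Finset.mem_filter.1 hm with ⟨hmr, hmy⟩
          rw [Finset.mem_range] at hmr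
          rcases (hymem m).1 hmy with ⟨i, rfl⟩
          refine Finset.mem_image.2 ⟨i, Finset.mem_range.2 ?_, rfl⟩
          by_contra hin
          push_neg at hin
          have : a n ≤ a i := hamono.monotone hin
          omega
        have hc1 := Finset.card_le_card hsubim
        have hc2 : ((Finset.range n).image a).card ≤ n := by
          apply le_trans (Finset.card_image_le)
          rw [Finset.card_range]
        omega
      · intro m hm
        rw [hz₀]
        exact hyy₀ m hm
    refine ⟨y, subset_closure hyH₀, ?_, ?_⟩
    · -- y is infinite
      have : Set.range a ⊆ {n | y n = true} := by
        rintro m ⟨n, rfl⟩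
        exact (hymem (a n)).2 ⟨n, rfl⟩
      exact Set.Infinite.mono this (Set.infinite_range_of_injective hamono.injective)
    · intro n hn
      exact hy₀sub n (hyy₀ n hn)
end

section
/- For every analytic tall ideal 𝓘 on ω there exists an F_σ tall ideal 𝓙 on ω that is Katětov below 𝓘, i.e., there is a function f : ω → ω such that f⁻¹(A) ∈ 𝓘 whenever A ∈ 𝓙. (In fact one may take 𝓙 ⊆ 𝓘 and f the identity.) Hence tall F_σ ideals are dense among tall analytic ideals in the Katětov order. -/
open MeasureTheory

namespace FsAux

open Filter

/-- number of elements of `z` below `a` -/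
def cnt (z : ℕ → Bool) (a : ℕ) : ℕ := ((Finset.range a).filter fun m => z m = true).card

lemma cnt_mono (z : ℕ → Bool) {a b : ℕ} (h : a ≤ b) : cnt z a ≤ cnt z b :=
  Finset.card_le_card (Finset.filter_subset_filter _ (Finset.range_subset_range.2 h))

lemma cnt_congr {z z' : ℕ → Bool} (a : ℕ) (h : ∀ m < a, z m = z' m) : cnt z a = cnt z' a := by
  unfold cnt
  congr 1
  apply Finset.filter_congr
  intro m hm
  rw [h m (Finset.mem_range.1 hm)]

lemma cnt_lt {z : ℕ → Bool} {a b : ℕ} (hab : a ≤ b) (hzb : z b = true) :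
    cnt z a < cnt z (b + 1) := by
  have hsub : insert b ((Finset.range a).filter fun m => z m = true) ⊆
      (Finset.range (b+1)).filter fun m => z m = true := by
    intro m hm
    rcases Finset.mem_insert.1 hm with rfl | hm
    · exact Finset.mem_filter.2 ⟨Finset.mem_range.2 (Nat.lt_succ_self _), hzb⟩
    · rcases Finset.mem_filter.1 hm with ⟨h1, h2⟩
      exact Finset.mem_filter.2 ⟨Finset.mem_range.2 (by have := Finset.mem_range.1 h1; omega), h2⟩
  have hb : b ∉ (Finset.range a).filter fun m => z m = true := by
    intro hb
    have := Finset.mem_range.1 (Finset.mem_filter.1 hb).1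
    omega
  calc cnt z a < cnt z a + 1 := Nat.lt_succ_self _
    _ = (insert b ((Finset.range a).filter fun m => z m = true)).card := by
        rw [Finset.card_insert_of_notMem hb]; rfl
    _ ≤ cnt z (b+1) := Finset.card_le_card hsub

lemma lt_cnt_of_infinite {z : ℕ → Bool} (hz : {m | z m = true}.Infinite) (j : ℕ) :
    ∃ N, j < cnt z N := by
  induction j with
  | zero =>
    obtain ⟨b, hb, _⟩ := hz.exists_gt 0
    exact ⟨b + 1, lt_of_le_of_lt (Nat.zero_le _) (cnt_lt (Nat.zero_le b) hb)⟩
  | succ j ih =>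
    obtain ⟨N, hN⟩ := ih
    obtain ⟨b, hb, hNb⟩ := hz.exists_gt N
    exact ⟨b + 1, by have := cnt_lt (le_of_lt hNb) hb; omega⟩

/-- the sparsified family inside `range g` -/
def Kp (g : (ℕ → ℕ) → ℕ → Bool) : Set (ℕ → Bool) :=
  {z | ∃ w : ℕ → ℕ, (∀ n, cnt z (w n) ≤ n) ∧ ∀ m, z m = true → g w m = true}

/-- Any infinite element of the closure of `Kp g` is already in `Kp g`. -/
lemma closure_Kp (g : (ℕ → ℕ) → ℕ → Bool) (hg : Continuous g) {z : ℕ → Bool}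
    (hz : z ∈ closure (Kp g)) (hzi : {m | z m = true}.Infinite) : z ∈ Kp g := by
  obtain ⟨u, hu, hul⟩ := mem_closure_iff_seq_limit.1 hz
  choose w hw1 hw2 using hu
  have hptw : ∀ m, ∀ᶠ k in atTop, u k m = z m := by
    intro m
    have h := (tendsto_pi_nhds.1 hul) m
    rwa [nhds_discrete, tendsto_pure] at h
  have hbdd : ∀ n, ∃ M, ∀ k, w k n ≤ M := by
    intro n
    obtain ⟨N, hN⟩ := lt_cnt_of_infinite hzi n
    have hev : ∀ᶠ k in atTop, ∀ m ∈ Finset.range N, u k m = z m :=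
      (eventually_all_finset (Finset.range N)).2 fun m _ => hptw m
    have hev2 : ∀ᶠ k in atTop, w k n < N := by
      filter_upwards [hev] with k hk
      by_contra hcon
      push_neg at hcon
      have h1 : cnt (u k) N = cnt z N :=
        cnt_congr N fun m hm => hk m (Finset.mem_range.2 hm)
      have h2 : cnt (u k) N ≤ cnt (u k) (w k n) := cnt_mono _ hcon
      have := hw1 k n
      omega
    obtain ⟨k0, hk0⟩ := eventually_atTop.1 hev2
    refine ⟨max N ((Finset.range k0).sup fun k => w k n), fun k => ?_⟩
    rcases lt_or_ge k k0 with hk | hk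
    · exact le_trans (Finset.le_sup (f := fun k => w k n) (Finset.mem_range.2 hk))
        (le_max_right _ _)
    · exact le_trans (le_of_lt (hk0 k hk)) (le_max_left _ _)
  choose M hM using hbdd
  have hS : IsCompact (Set.univ.pi fun n => Set.Iic (M n)) :=
    isCompact_univ_pi fun n => (Set.finite_Iic (M n)).isCompact
  have hwS : ∀ k, w k ∈ Set.univ.pi fun n => Set.Iic (M n) :=
    fun k n _ => hM n k
  obtain ⟨wl, _, φ, hφ, hφt⟩ := hS.tendsto_subseq hwS
  have hφa : Tendsto φ atTop atTop := hφ.tendsto_atTop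
  have hwlev : ∀ n, ∀ᶠ k in atTop, w (φ k) n = wl n := by
    intro n
    have h := (tendsto_pi_nhds.1 hφt) n
    rwa [nhds_discrete, tendsto_pure] at h
  refine ⟨wl, ?_, ?_⟩
  · intro n
    have hev : ∀ᶠ k in atTop, ∀ m ∈ Finset.range (wl n), u (φ k) m = z m :=
      (eventually_all_finset (Finset.range (wl n))).2 fun m _ => hφa.eventually (hptw m)
    obtain ⟨k, hk1, hk2⟩ := (hev.and (hwlev n)).exists
    have h1 : cnt z (wl n) = cnt (u (φ k)) (wl n) :=
      (cnt_congr _ fun m hm => hk1 m (Finset.mem_range.2 hm)).symm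
    rw [h1, ← hk2]
    exact hw1 (φ k) n
  · intro m hm
    have h1 : ∀ᶠ k in atTop, u (φ k) m = true := by
      filter_upwards [hφa.eventually (hptw m)] with k hk
      rw [hk, hm]
    have h2 : Tendsto (fun k => g (w (φ k))) atTop (nhds (g wl)) :=
      (hg.tendsto wl).comp hφt
    have h3 : ∀ᶠ k in atTop, g (w (φ k)) m = g wl m := by
      have h := (tendsto_pi_nhds.1 h2) m
      rwa [nhds_discrete, tendsto_pure] at h
    obtain ⟨k, hk1, hk2⟩ := (h1.and h3).exists
    rw [← hk2]
    exact hw2 (φ k) m hk1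

/-- Any infinite set has an infinite subset which is sparse with respect to `w`. -/
theorem sparsify {y : ℕ → Bool} (w : ℕ → ℕ) (hy : {m | y m = true}.Infinite) :
    ∃ z : ℕ → Bool, {m | z m = true}.Infinite ∧ (∀ m, z m = true → y m = true) ∧
      ∀ n, cnt z (w n) ≤ n := by
  classical
  set W : ℕ → ℕ := fun j => (Finset.range (j+1)).sup w with hW
  have H : ∀ a : ℕ, ∃ b, y b = true ∧ a < b := fun a => by
    obtain ⟨b, hb, hab⟩ := hy.exists_gt a
    exact ⟨b, hb, hab⟩
  choose nxt hnxt1 hnxt2 using H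
  set c : ℕ → ℕ := fun j => Nat.rec (nxt (W 0)) (fun j cj => nxt (max cj (W (j+1)))) j with hc
  have hcs : ∀ j, c (j+1) = nxt (max (c j) (W (j+1))) := fun j => rfl
  have hcy : ∀ j, y (c j) = true := by
    intro j; cases j with
    | zero => exact hnxt1 _
    | succ j => rw [hcs]; exact hnxt1 _
  have hcW : ∀ j, W j < c j := by
    intro j; cases j with
    | zero => exact hnxt2 _
    | succ j => rw [hcs]; exact lt_of_le_of_lt (le_max_right _ _) (hnxt2 _)
  have hmono : StrictMono c := strictMono_nat_of_lt_succ fun j => by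
    rw [hcs]; exact lt_of_le_of_lt (le_max_left _ _) (hnxt2 _)
  have hwc : ∀ n j, n ≤ j → w n < c j := by
    intro n j hnj
    exact lt_of_le_of_lt (Finset.le_sup (Finset.mem_range.2 (by omega))) (hcW j)
  refine ⟨fun m => decide (∃ j, c j = m), ?_, ?_, ?_⟩
  · have : {m | (decide (∃ j, c j = m)) = true} = Set.range c := by
      ext m; simp [decide_eq_true_iff, Set.mem_range]
    rw [this]
    exact Set.infinite_range_of_injective hmono.injective
  · intro m hm
    obtain ⟨j, rfl⟩ := decide_eq_true_iff.1 hm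
    exact hcy j
  · intro n
    have hsub : ((Finset.range (w n)).filter fun m => (decide (∃ j, c j = m)) = true) ⊆
        (Finset.range n).image c := by
      intro m hm
      obtain ⟨h1, h2⟩ := Finset.mem_filter.1 hm
      obtain ⟨j, rfl⟩ := decide_eq_true_iff.1 h2
      have hmw : c j < w n := Finset.mem_range.1 h1
      have hjn : j < n := by
        by_contra hcon
        have := hwc n j (by omega)
        omega
      exact Finset.mem_image.2 ⟨j, Finset.mem_range.2 hjn, rfl⟩
    calc cnt _ (w n) ≤ ((Finset.range n).image c).card := Finset.card_le_card hsub
      _ ≤ n := le_trans Finset.card_image_le (by simp)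

/-- the ideal generated by `K` (together with finite sets), leveled -/
def Jn (K : Set (ℕ → Bool)) (n : ℕ) : Set (ℕ → Bool) :=
  {x | ∃ y : ℕ → ℕ → Bool, (∀ i, y i ∈ K) ∧
    ∀ m, x m = true → m < n ∨ ∃ i < n, y i m = true}

theorem isClosed_Jn (K : Set (ℕ → Bool)) (hK : IsClosed K) (n : ℕ) : IsClosed (Jn K n) := by
  set S : Set ((ℕ → Bool) × (ℕ → ℕ → Bool)) :=
    (⋂ i, {p | p.2 i ∈ K}) ∩
      ⋂ m, {p : (ℕ → Bool) × (ℕ → ℕ → Bool) |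
        p.1 m = true → m < n ∨ ∃ i < n, p.2 i m = true} with hSdef
  have hS1 : IsClosed S := by
    apply IsClosed.inter
    · exact isClosed_iInter fun i =>
        hK.preimage ((continuous_apply i).comp continuous_snd)
    · apply isClosed_iInter
      intro m
      by_cases hmn : m < n
      · have : {p : (ℕ → Bool) × (ℕ → ℕ → Bool) |
            p.1 m = true → m < n ∨ ∃ i < n, p.2 i m = true} = Set.univ := by
          ext p; simp [hmn]
        rw [this]; exact isClosed_univ
      · have heq : {p : (ℕ → Bool) × (ℕ → ℕ → Bool) |
            p.1 m = true → m < n ∨ ∃ i < n, p.2 i m = true} =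
            {p : (ℕ → Bool) × (ℕ → ℕ → Bool) | p.1 m = false} ∪
              ⋃ i ∈ Set.Iio n, {p : (ℕ → Bool) × (ℕ → ℕ → Bool) | p.2 i m = true} := by
          ext p
          simp only [Set.mem_setOf_eq, Set.mem_union, Set.mem_iUnion, Set.mem_Iio, hmn,
            false_or, exists_prop]
          cases h : p.1 m <;> simp
        rw [heq]
        apply IsClosed.union
        · exact isClosed_singleton.preimage ((continuous_apply m).comp continuous_fst)
        · exact (Set.finite_Iio n).isClosed_biUnion fun i _ =>
            isClosed_singleton.preimage
              ((continuous_apply m).comp ((continuous_apply i).comp continuous_snd))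
  have hJeq : Jn K n = Prod.fst '' S := by
    ext x
    constructor
    · rintro ⟨y, hy1, hy2⟩
      exact ⟨(x, y), ⟨Set.mem_iInter.2 hy1, Set.mem_iInter.2 hy2⟩, rfl⟩
    · rintro ⟨⟨x', y⟩, ⟨h1, h2⟩, rfl⟩
      exact ⟨y, Set.mem_iInter.1 h1, Set.mem_iInter.1 h2⟩
  rw [hJeq]
  exact (hS1.isCompact.image continuous_fst).isClosed

def bigOr (y : ℕ → ℕ → Bool) : ℕ → ℕ → Bool
  | 0 => fun _ => false
  | k+1 => fun m => bigOr y k m || y k m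

lemma bigOr_true {y : ℕ → ℕ → Bool} {k m : ℕ} :
    bigOr y k m = true ↔ ∃ i < k, y i m = true := by
  induction k with
  | zero => simp [bigOr]
  | succ k ih =>
    show (bigOr y k m || y k m) = true ↔ _
    rw [Bool.or_eq_true, ih]
    constructor
    · rintro (⟨i, hi, h⟩ | h)
      · exact ⟨i, by omega, h⟩
      · exact ⟨k, by omega, h⟩
    · rintro ⟨i, hi, h⟩
      rcases Nat.lt_succ_iff_lt_or_eq.1 hi with hi | rfl
      · exact Or.inl ⟨i, hi, h⟩
      · exact Or.inr h

lemma bigOr_mem {I : Set (ℕ → Bool)} (hIdeal : IsIdealOn I) {y : ℕ → ℕ → Bool}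
    (hy : ∀ i, y i ∈ I) (k : ℕ) : bigOr y k ∈ I := by
  induction k with
  | zero =>
    apply hIdeal.2.2.1
    simp [bigOr]
  | succ k ih => exact hIdeal.1 _ _ ih (hy k)

end FsAux

open FsAux Filter

/-- For every analytic tall ideal `I` on ω there is an `F_σ` tall ideal `J` Katětov below `I`:
there is `f : ω → ω` with `f⁻¹(A) ∈ I` whenever `A ∈ J`. In fact one may take `J ⊆ I`
and `f` the identity; hence tall `F_σ` ideals are dense among tall analytic ideals in
the Katětov order. -/
theorem Fsigma_tall_ideals_Katetov_dense
    (I : Set (ℕ → Bool)) (hIdeal : IsIdealOn I) (hAnalytic : AnalyticSet I)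
    (hTall : IsTall I) :
    ∃ J : Set (ℕ → Bool), IsIdealOn J ∧ IsFsigma J ∧ IsTall J ∧ J ⊆ I ∧
      ∃ f : ℕ → ℕ, f = id ∧ ∀ A ∈ J, (fun n => A (f n)) ∈ I := by
  classical
  rw [AnalyticSet] at hAnalytic
  have hne : (fun _ => false) ∈ I := hIdeal.2.2.1 _ (by simp)
  rcases hAnalytic with hempty | ⟨g, hg, hgr⟩
  · rw [hempty] at hne
    exact absurd hne (Set.notMem_empty _)
  set K : Set (ℕ → Bool) := closure (Kp g) with hK
  have hKc : IsClosed K := isClosed_closure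
  have hK'K : Kp g ⊆ K := subset_closure
  -- every element of K is covered by an element of I
  have hcover : ∀ z ∈ K, ∃ u ∈ I, ∀ m, z m = true → u m = true := by
    intro z hz
    by_cases hzi : {m | z m = true}.Infinite
    · obtain ⟨w, _, hw2⟩ := closure_Kp g hg hz hzi
      exact ⟨g w, hgr ▸ Set.mem_range_self w, hw2⟩
    · exact ⟨z, hIdeal.2.2.1 z (Set.not_infinite.1 hzi), fun m h => h⟩
  set J : Set (ℕ → Bool) := ⋃ n, Jn K n with hJ
  have hJI : J ⊆ I := by
    intro x hx
    obtain ⟨n, y, hyK, hcond⟩ : ∃ n, ∃ y : ℕ → ℕ → Bool, (∀ i, y i ∈ K) ∧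
        ∀ m, x m = true → m < n ∨ ∃ i < n, y i m = true := by
      obtain ⟨n, hn⟩ := Set.mem_iUnion.1 hx
      exact ⟨n, hn⟩
    choose u huI hucov using fun i => hcover (y i) (hyK i)
    have hV : (fun m => (decide (m < n) || bigOr u n m)) ∈ I := by
      apply hIdeal.1
      · apply hIdeal.2.2.1
        apply Set.Finite.subset (Set.finite_Iio n)
        intro m hm
        exact of_decide_eq_true hm
      · exact bigOr_mem hIdeal huI n
    apply hIdeal.2.1 x _ hV
    intro m hm
    rcases hcond m hm with h | ⟨i, hi, h⟩
    · simp [h]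
    · have : bigOr u n m = true := bigOr_true.2 ⟨i, hi, hucov i m h⟩
      simp [this]
  have hz0 : (fun _ => false) ∈ Kp g := by
    refine ⟨fun _ => 0, fun n => ?_, fun m h => by simp at h⟩
    simp [cnt]
  refine ⟨J, ⟨?_, ?_, ?_, ?_⟩, ⟨Jn K, fun n => isClosed_Jn K hKc n, rfl⟩, ?_, hJI,
    id, rfl, fun A hA => hJI hA⟩
  · -- closed under unions
    intro x y hx hy
    obtain ⟨a, ya, hya, ha⟩ : ∃ a, ∃ ya : ℕ → ℕ → Bool, (∀ i, ya i ∈ K) ∧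
        ∀ m, x m = true → m < a ∨ ∃ i < a, ya i m = true := by
      obtain ⟨a, h⟩ := Set.mem_iUnion.1 hx; exact ⟨a, h⟩
    obtain ⟨b, yb, hyb, hb⟩ : ∃ b, ∃ yb : ℕ → ℕ → Bool, (∀ i, yb i ∈ K) ∧
        ∀ m, y m = true → m < b ∨ ∃ i < b, yb i m = true := by
      obtain ⟨b, h⟩ := Set.mem_iUnion.1 hy; exact ⟨b, h⟩
    refine Set.mem_iUnion.2 ⟨a + b, fun i => if i < a then ya i else yb (i - a), ?_, ?_⟩
    · intro i
      dsimp only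
      split
      · exact hya i
      · exact hyb _
    · intro m hm
      rcases Bool.or_eq_true _ _ ▸ hm with hm | hm
      · rcases ha m hm with h | ⟨i, hi, h⟩
        · exact Or.inl (by omega)
        · exact Or.inr ⟨i, by omega, by simp only [if_pos hi]; exact h⟩
      · rcases hb m hm with h | ⟨i, hi, h⟩
        · exact Or.inl (by omega)
        · refine Or.inr ⟨a + i, by omega, ?_⟩
          simp only [show ¬(a + i < a) by omega, if_false, Nat.add_sub_cancel_left]
          exact h
  · -- closed under subsets
    intro x y hy hsub
    obtain ⟨n, hn⟩ := Set.mem_iUnion.1 hy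
    obtain ⟨yy, h1, h2⟩ := hn
    exact Set.mem_iUnion.2 ⟨n, yy, h1, fun m hm => h2 m (hsub m hm)⟩
  · -- contains finite sets
    intro x hfin
    obtain ⟨b, hb⟩ := hfin.bddAbove
    refine Set.mem_iUnion.2 ⟨b + 1, fun _ => fun _ => false, fun i => hK'K hz0, ?_⟩
    intro m hm
    exact Or.inl (by have : m ≤ b := hb hm; omega)
  · -- proper
    intro h
    exact hIdeal.2.2.2 (hJI h)
  · -- tall
    intro x hx
    obtain ⟨y, hyI, hyinf, hyx⟩ := hTall x hx
    obtain ⟨w, hw⟩ : ∃ w, g w = y := by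
      rw [← hgr] at hyI
      exact hyI
    obtain ⟨z, hzinf, hzy, hcnt⟩ := sparsify w hyinf
    have hzK : z ∈ Kp g := ⟨w, hcnt, fun m hm => by rw [hw]; exact hzy m hm⟩
    have hzJ : z ∈ J :=
      Set.mem_iUnion.2 ⟨1, fun _ => z, fun i => hK'K hzK,
        fun m hm => Or.inr ⟨0, Nat.one_pos, hm⟩⟩
    exact ⟨z, hzJ, hzinf, fun m hm => hyx m (hzy m hm)⟩
end

section
/- Let F ⊆ 2^ω × ω^ω be a closed set whose projection to the first coordinate is all of 2^ω. Let A₀ be the set of antichains of 2^{<ω}, and let B be the set of all infinite S ⊆ 2^{<ω} such that there exist f ∈ 2^ω with S ⊆ f' and g ∈ ω^ω with (f,g) ∈ F and g(k) ≤ Enum_f(S)(k) for all k (where f' = {f↾n : n ∈ ω} and Enum_f(S) enumerates {n : f↾n ∈ S} increasingly). Then the ideal 𝓙 on 2^{<ω} generated by A₀ ∪ B is a tall F_σ ideal: every infinite x ⊆ 2^{<ω} contains an infinite member of 𝓙, and 𝓙 is a countable union of closed subsets of 𝒫(2^{<ω}). -/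
/-- The ideal generated by a family `G` of subsets of `α`: all sets covered by a
finite set together with finitely many members of `G`. -/
def genIdeal {α : Type*} (G : Set (α → Bool)) : Set (α → Bool) :=
  {x | ∃ t : Set α, t.Finite ∧ ∃ s : Finset (α → Bool), ↑s ⊆ G ∧
    ∀ a, x a = true → a ∈ t ∨ ∃ y ∈ s, y a = true}

/-- `seg f n` is the restriction `f↾n` of `f : 2^ω` to its first `n` values,
an element of `2^{<ω}` (finite binary sequences coded as `List Bool`). -/
def seg (f : ℕ → Bool) (n : ℕ) : List Bool := List.ofFn (fun i : Fin n => f i)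

/-- `A0` is the set of (characteristic functions of) antichains of `2^{<ω}`. -/
def A0 : Set (List Bool → Bool) :=
  {S | ∀ a b : List Bool, S a = true → S b = true → a <+: b → a = b}

/-- `Bset F` is the collection of infinite `S ⊆ 2^{<ω}` such that `S ⊆ f'` for some
`f ∈ 2^ω` and some `g` with `(f,g) ∈ F` satisfies `g ≤ Enum_f(S)` pointwise, where
`Enum_f(S)` is the increasing enumeration of `{n : f↾n ∈ S}` (given by `Nat.nth`). -/
def Bset (F : Set ((ℕ → Bool) × (ℕ → ℕ))) : Set (List Bool → Bool) :=
  {S | {l | S l = true}.Infinite ∧ ∃ f : ℕ → Bool,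
    (∀ l, S l = true → ∃ n, l = seg f n) ∧
    ∃ g : ℕ → ℕ, (f, g) ∈ F ∧ ∀ k, g k ≤ Nat.nth (fun n => S (seg f n) = true) k}

/-! Apart from a member of `B` on its own branch, every generator meets each branch
`f' = {f↾n}` in a finite set. A finite set and finitely many generators therefore cannot cover a
branch avoiding their finitely many exceptional ones, so the ideal is proper. Tallness is Ramsey's
theorem: an infinite subset of `2^{<ω}` contains an infinite antichain or an infinite chain; a chain
lies on a branch `f`, where it can be thinned out to grow faster than some `g` with `(f, g) ∈ F`.

The ideal generated by a closed family `K` is the countable union, over finite `t` and `n`, of the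
compact sets of subsets of `t ∪ y₁ ∪ ⋯ ∪ yₙ` with all `yᵢ ∈ K`. Taking the closure of `A₀ ∪ B` adds
only finite sets: `A₀` is closed, and an infinite limit `S` of members of `B` is in `B`, since the
witnesses `(f, g)` of members agreeing with `S` on longer and longer sequences have every
coordinate `g k` eventually bounded by `Enum(S)(k)`, so a subsequence converges in the closed `F`.
-/

open Filter Topology

section Seg

@[simp]
lemma seg_length (f : ℕ → Bool) (n : ℕ) : (seg f n).length = n := by simp [seg]

lemma seg_injective (f : ℕ → Bool) : Function.Injective (seg f) := fun m n h => by
  simpa using congrArg List.length h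

lemma seg_eq_seg_iff {f h : ℕ → Bool} {n : ℕ} : seg f n = seg h n ↔ ∀ i < n, f i = h i := by
  simp [seg, List.ofFn_inj, funext_iff, Fin.forall_iff]

lemma seg_prefix_seg (f : ℕ → Bool) {m n : ℕ} (h : m ≤ n) : seg f m <+: seg f n := by
  rw [List.prefix_iff_eq_take]
  apply List.ext_getElem (by simp [h])
  intro i _ _
  simp [seg]

lemma exists_eq_seg_iff {f : ℕ → Bool} {l : List Bool} :
    (∃ n, l = seg f n) ↔ l = seg f l.length :=
  ⟨fun ⟨n, hn⟩ => by rw [hn, seg_length], fun h => ⟨_, h⟩⟩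

lemma exists_seg_of_chain {c : ℕ → List Bool} (hlen : StrictMono fun n => (c n).length)
    (hc : ∀ m n, m < n → c m <+: c n) : ∃ f : ℕ → Bool, ∀ n, c n = seg f (c n).length := by
  have hlt : ∀ i, i < (c (i + 1)).length := fun i => (Nat.lt_succ_self i).trans_le hlen.le_apply
  refine ⟨fun i => (c (i + 1))[i]'(hlt i), fun n => List.ext_getElem (by simp) fun i h _ => ?_⟩
  simp only [seg, List.getElem_ofFn]
  rcases Nat.lt_trichotomy n (i + 1) with h' | rfl | h'
  · exact (hc n (i + 1) h').getElem h
  · rfl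
  · exact ((hc (i + 1) n h').getElem (hlt i)).symm

end Seg

section GenIdeal

variable {α : Type*} {G K : Set (α → Bool)} {x y : α → Bool}

lemma mem_genIdeal_of_mem (h : x ∈ G) : x ∈ genIdeal G :=
  ⟨∅, Set.finite_empty, {x}, by simpa using h, fun _ ha => Or.inr ⟨x, by simp, ha⟩⟩

lemma mem_genIdeal_of_finite (h : {a | x a = true}.Finite) : x ∈ genIdeal G :=
  ⟨_, h, ∅, by simp, fun _ ha => Or.inl ha⟩

lemma or_mem_genIdeal (hx : x ∈ genIdeal G) (hy : y ∈ genIdeal G) :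
    (fun a => x a || y a) ∈ genIdeal G := by
  classical
  obtain ⟨t, ht, s, hs, hxs⟩ := hx
  obtain ⟨t', ht', s', hs', hys'⟩ := hy
  refine ⟨t ∪ t', ht.union ht', s ∪ s', by simpa using ⟨hs, hs'⟩, fun a ha => ?_⟩
  rcases Bool.or_eq_true_iff.mp ha with h | h
  · rcases hxs a h with h | ⟨z, hz, hza⟩
    exacts [Or.inl (Or.inl h), Or.inr ⟨z, Finset.mem_union_left _ hz, hza⟩]
  · rcases hys' a h with h | ⟨z, hz, hza⟩
    exacts [Or.inl (Or.inr h), Or.inr ⟨z, Finset.mem_union_right _ hz, hza⟩]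

lemma mem_genIdeal_of_imp (hy : y ∈ genIdeal G) (hxy : ∀ a, x a = true → y a = true) :
    x ∈ genIdeal G := by
  obtain ⟨t, ht, s, hs, h⟩ := hy
  exact ⟨t, ht, s, hs, fun a ha => h a (hxy a ha)⟩

lemma genIdeal_mono (h : G ⊆ K) : genIdeal G ⊆ genIdeal K :=
  fun _ ⟨t, ht, s, hs, hx⟩ => ⟨t, ht, s, hs.trans h, hx⟩

lemma genIdeal_subset {I : Set (α → Bool)}
    (hor : ∀ x y, x ∈ I → y ∈ I → (fun a => x a || y a) ∈ I)
    (himp : ∀ x y, y ∈ I → (∀ a, x a = true → y a = true) → x ∈ I)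
    (hfin : ∀ x : α → Bool, {a | x a = true}.Finite → x ∈ I) (hG : G ⊆ I) :
    genIdeal G ⊆ I := by
  classical
  rintro x ⟨t, ht, s, hs, hx⟩
  refine himp x (fun a => decide (a ∈ t ∨ ∃ y ∈ s, y a = true)) ?_
    fun a ha => decide_eq_true (hx a ha)
  clear hx
  induction s using Finset.induction_on with
  | empty => simpa using hfin _ (by simpa using ht)
  | insert y s _ ih =>
    rw [Finset.coe_insert, Set.insert_subset_iff] at hs
    convert hor _ _ (ih hs.2) (hG hs.1) using 1
    ext a
    simp only [Finset.mem_insert, exists_eq_or_imp]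
    cases y a <;> simp

lemma genIdeal_eq_of_subset (hGK : G ⊆ K) (hK : K ⊆ genIdeal G) : genIdeal K = genIdeal G :=
  (genIdeal_subset (fun _ _ => or_mem_genIdeal) (fun _ _ => mem_genIdeal_of_imp)
    (fun _ => mem_genIdeal_of_finite) hK).antisymm (genIdeal_mono hGK)

def coverSet (K : Set (α → Bool)) (t : Set α) (n : ℕ) : Set (α → Bool) :=
  {x | ∃ y : Fin n → α → Bool, (∀ i, y i ∈ K) ∧ ∀ a, x a = true → a ∈ t ∨ ∃ i, y i a = true}

lemma mem_genIdeal_iff : x ∈ genIdeal K ↔ ∃ (t : Finset α) (n : ℕ), x ∈ coverSet K t n := by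
  constructor
  · rintro ⟨t, ht, s, hs, hx⟩
    obtain ⟨n, y, hy⟩ := s.finite_toSet.fin_embedding
    refine ⟨ht.toFinset, n, y, fun i => hs (hy ▸ Set.mem_range_self i), fun a ha => ?_⟩
    rcases hx a ha with h | ⟨z, hz, hza⟩
    · exact Or.inl (ht.mem_toFinset.mpr h)
    · obtain ⟨i, rfl⟩ : z ∈ Set.range y := hy ▸ hz
      exact Or.inr ⟨i, hza⟩
  · rintro ⟨t, n, y, hy, hx⟩
    classical
    refine ⟨t, t.finite_toSet, Finset.univ.image y, by simpa [Set.range_subset_iff] using hy,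
      fun a ha => (hx a ha).imp_right fun ⟨i, hi⟩ => ⟨y i, by simp, hi⟩⟩

lemma isClosed_coverSet (hK : IsClosed K) (t : Set α) (n : ℕ) : IsClosed (coverSet K t n) := by
  set R : Set ((α → Bool) × (Fin n → α → Bool)) :=
    {p | (∀ i, p.2 i ∈ K) ∧ ∀ a, p.1 a = true → a ∈ t ∨ ∃ i, p.2 i a = true}
  have hR : IsClosed R := by
    simp only [R, Set.ofPred_and, Set.ofPred_forall]
    refine (isClosed_iInter fun i =>
      hK.preimage (f := fun p : (α → Bool) × (Fin n → α → Bool) => p.2 i) (by fun_prop)).inter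
      (isClosed_iInter fun a => ?_)
    exact (isClosed_discrete
      {q : Bool × (Fin n → Bool) | q.1 = true → a ∈ t ∨ ∃ i, q.2 i = true}).preimage
        (f := fun p : (α → Bool) × (Fin n → α → Bool) => (p.1 a, fun i => p.2 i a)) (by fun_prop)
  have hC : coverSet K t n = Prod.fst '' R :=
    Set.ext fun x => ⟨fun ⟨y, h⟩ => ⟨(x, y), h, rfl⟩, fun ⟨⟨_, y⟩, h, hx⟩ => hx ▸ ⟨y, h⟩⟩
  rw [hC]
  exact (hR.isCompact.image continuous_fst).isClosed

lemma isFsigma_iUnion {X ι : Type*} [TopologicalSpace X] [Countable ι] [Nonempty ι]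
    {C : ι → Set X} (hC : ∀ i, IsClosed (C i)) : IsFsigma (⋃ i, C i) := by
  obtain ⟨e, he⟩ := exists_surjective_nat ι
  exact ⟨C ∘ e, fun n => hC (e n), (he.iUnion_comp C).symm⟩

lemma isFsigma_genIdeal [Countable α] (hK : IsClosed K) : IsFsigma (genIdeal K) := by
  have : genIdeal K = ⋃ q : Finset α × ℕ, coverSet K q.1 q.2 := by
    ext x
    simp [mem_genIdeal_iff]
  rw [this]
  exact isFsigma_iUnion fun q => isClosed_coverSet hK _ _

end GenIdeal

section Branches

variable {F : Set ((ℕ → Bool) × (ℕ → ℕ))} {S : List Bool → Bool}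

lemma subsingleton_seg_mem_of_mem_A0 (hS : S ∈ A0) (f : ℕ → Bool) :
    {n | S (seg f n) = true}.Subsingleton := by
  intro m hm n hn
  rcases le_total m n with h | h
  · exact seg_injective f (hS _ _ hm hn (seg_prefix_seg f h))
  · exact (seg_injective f (hS _ _ hn hm (seg_prefix_seg f h))).symm

lemma eq_of_infinite_seg_mem {f h : ℕ → Bool} (hS : ∀ l, S l = true → ∃ n, l = seg h n)
    (hinf : {n | S (seg f n) = true}.Infinite) : f = h := by
  funext i
  obtain ⟨n, hn, hin⟩ := hinf.exists_gt i
  have hfh := exists_eq_seg_iff.mp (hS _ hn)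
  rw [seg_length] at hfh
  exact seg_eq_seg_iff.mp hfh i hin

lemma subsingleton_infinite_branches (hS : S ∈ A0 ∪ Bset F) :
    {f | {n | S (seg f n) = true}.Infinite}.Subsingleton := by
  rcases hS with hA | ⟨-, h, hh, -⟩
  · exact fun f hf => absurd (subsingleton_seg_mem_of_mem_A0 hA f).finite hf
  · exact fun f hf f' hf' =>
      (eq_of_infinite_seg_mem hh hf).trans (eq_of_infinite_seg_mem hh hf').symm

lemma univ_notMem_genIdeal (F : Set ((ℕ → Bool) × (ℕ → ℕ))) :
    (fun _ => true) ∉ genIdeal (A0 ∪ Bset F) := by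
  rintro ⟨t, ht, s, hs, hcov⟩
  have hbad : (⋃ y ∈ s, {f | {n | y (seg f n) = true}.Infinite}).Finite :=
    s.finite_toSet.biUnion fun y hy => (subsingleton_infinite_branches (hs hy)).finite
  obtain ⟨f, hf⟩ := hbad.infinite_compl.nonempty
  have hfin : ∀ y ∈ s, {n | y (seg f n) = true}.Finite := fun y hy =>
    Set.not_infinite.mp fun h => hf (Set.mem_biUnion hy h)
  have hcover : Set.univ ⊆ seg f ⁻¹' t ∪ ⋃ y ∈ s, {n | y (seg f n) = true} := fun n _ =>
    (hcov (seg f n) rfl).imp id fun ⟨y, hy, h⟩ => Set.mem_biUnion hy h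
  exact Set.infinite_univ (((ht.preimage (seg_injective f).injOn).union
    (s.finite_toSet.biUnion hfin)).subset hcover)

end Branches

section Tall

lemma exists_strictMono_mem_ge {L : Set ℕ} (hL : L.Infinite) (g : ℕ → ℕ) :
    ∃ m : ℕ → ℕ, StrictMono m ∧ (∀ k, m k ∈ L) ∧ ∀ k, g k ≤ m k := by
  choose next hnext using hL.exists_gt
  let m : ℕ → ℕ := fun k => Nat.rec (next (g 0)) (fun k mk => next (max mk (g (k + 1)))) k
  refine ⟨m, strictMono_nat_of_lt_succ fun k => (le_max_left _ _).trans_lt (hnext _).2,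
    fun k => ?_, fun k => ?_⟩
  · cases k <;> exact (hnext _).1
  · cases k
    · exact (hnext _).2.le
    · exact (le_max_right _ _).trans (hnext _).2.le

lemma nth_mem_range_of_strictMono {m : ℕ → ℕ} (hm : StrictMono m) :
    Nat.nth (· ∈ Set.range m) = m := by
  have hinf : (Set.range m).Infinite := Set.infinite_range_of_injective hm.injective
  funext k
  refine (Nat.eq_nth_of_strictMonoOn_of_mapsTo_of_surjOn m ?_ ?_ (hm.strictMonoOn _)
    (fun hf => absurd hf hinf)).symm
  · rintro _ ⟨j, rfl⟩
    exact ⟨j, fun hf => absurd hf hinf, rfl⟩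
  · exact fun j _ => Set.mem_range_self j

lemma exists_seq_length_strictMono {x : List Bool → Bool} (hx : {l | x l = true}.Infinite) :
    ∃ c : ℕ → List Bool, (∀ n, x (c n) = true) ∧ StrictMono fun n => (c n).length := by
  set L := List.length '' {l | x l = true}
  have hL : L.Infinite := fun hfin =>
    hx <| (hfin.biUnion fun n _ => List.finite_length_eq Bool n).subset
    fun l hl => Set.mem_biUnion (Set.mem_image_of_mem _ hl) rfl
  choose c hc using fun k => Nat.nth_mem_of_infinite hL k
  refine ⟨c, fun n => (hc n).1, ?_⟩
  simpa only [(hc _).2] using Nat.nth_strictMono hL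

lemma exists_chain_or_antichain {x : List Bool → Bool} (hx : {l | x l = true}.Infinite) :
    ∃ c : ℕ → List Bool, (∀ n, x (c n) = true) ∧ (StrictMono fun n => (c n).length) ∧
      ((∀ m n, m < n → c m <+: c n) ∨ ∀ m n, m ≠ n → ¬ c m <+: c n) := by
  obtain ⟨c, hcx, hlen⟩ := exists_seq_length_strictMono hx
  have : IsTrans (List Bool) (· <+: ·) := ⟨fun _ _ _ => List.IsPrefix.trans⟩
  obtain ⟨g, hchain | hanti⟩ := exists_increasing_or_nonincreasing_subseq (· <+: ·) c
  · exact ⟨c ∘ g, fun n => hcx _, hlen.comp g.strictMono, Or.inl hchain⟩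
  refine ⟨c ∘ g, fun n => hcx _, hlen.comp g.strictMono, Or.inr fun m n hmn hpre => ?_⟩
  rcases hmn.lt_or_gt with h | h
  · exact hanti m n h hpre
  · exact (hpre.length_le.trans_lt ((hlen.comp g.strictMono) h)).false

variable {F : Set ((ℕ → Bool) × (ℕ → ℕ))}

lemma exists_mem_Bset_of_infinite_seg_mem (hproj : ∀ f : ℕ → Bool, ∃ g : ℕ → ℕ, (f, g) ∈ F)
    {x : List Bool → Bool} {f : ℕ → Bool} (hx : {n | x (seg f n) = true}.Infinite) :
    ∃ y ∈ Bset F, {l | y l = true}.Infinite ∧ ∀ l, y l = true → x l = true := by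
  classical
  obtain ⟨g, hg⟩ := hproj f
  obtain ⟨m, hm, hmx, hgm⟩ := exists_strictMono_mem_ge hx g
  set y : List Bool → Bool := fun l => decide (l ∈ Set.range (seg f ∘ m))
  have hyinf : {l | y l = true}.Infinite := by
    exact (Set.infinite_range_of_injective ((seg_injective f).comp hm.injective)).mono
      fun l hl => by simpa [y] using hl
  have henum : (fun n => y (seg f n) = true) = (· ∈ Set.range m) := by
    funext n
    simp [y, (seg_injective f).eq_iff]
  refine ⟨y, ⟨hyinf, f, ?_, g, hg, fun k => ?_⟩, hyinf, ?_⟩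
  · intro l hl
    obtain ⟨k, rfl⟩ := of_decide_eq_true hl
    exact ⟨m k, rfl⟩
  · rw [henum, nth_mem_range_of_strictMono hm]
    exact hgm k
  · intro l hl
    obtain ⟨k, rfl⟩ := of_decide_eq_true hl
    exact hmx k

lemma isTall_genIdeal (hproj : ∀ f : ℕ → Bool, ∃ g : ℕ → ℕ, (f, g) ∈ F) :
    IsTall (genIdeal (A0 ∪ Bset F)) := by
  classical
  intro x hx
  obtain ⟨c, hcx, hlen, hchain | hanti⟩ := exists_chain_or_antichain hx
  · obtain ⟨f, hf⟩ := exists_seg_of_chain hlen hchain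
    have hxf : {n | x (seg f n) = true}.Infinite :=
      (Set.infinite_range_of_injective hlen.injective).mono <| by
        rintro _ ⟨n, rfl⟩
        simpa [← hf n] using hcx n
    obtain ⟨y, hy, hyinf, hyx⟩ := exists_mem_Bset_of_infinite_seg_mem hproj hxf
    exact ⟨y, mem_genIdeal_of_mem (Or.inr hy), hyinf, hyx⟩
  · refine ⟨fun l => decide (l ∈ Set.range c), mem_genIdeal_of_mem (Or.inl ?_), ?_, ?_⟩
    · rintro _ _ ha hb hab
      obtain ⟨m, rfl⟩ := of_decide_eq_true ha
      obtain ⟨n, rfl⟩ := of_decide_eq_true hb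
      by_contra hne
      exact hanti m n (fun h => hne (h ▸ rfl)) hab
    · exact (Set.infinite_range_of_injective hlen.injective.of_comp).mono
        fun l hl => by simpa using hl
    · rintro _ hl
      obtain ⟨n, rfl⟩ := of_decide_eq_true hl
      exact hcx n

end Tall

section Closure

lemma isClosed_A0 : IsClosed A0 := by
  have : A0 = ⋂ a : List Bool, ⋂ b : List Bool, (fun S : List Bool → Bool => (S a, S b)) ⁻¹'
      {p | p.1 = true → p.2 = true → a <+: b → a = b} := by
    ext
    simp [A0]
  rw [this]
  exact isClosed_iInter fun a => isClosed_iInter fun b =>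
    (isClosed_discrete _).preimage (by fun_prop)

lemma eventually_apply_eq {α β ι : Type*} [TopologicalSpace β] [DiscreteTopology β]
    {l : Filter ι} {u : ι → α → β} {S : α → β} (h : Tendsto u l (𝓝 S)) (a : α) :
    ∀ᶠ i in l, u i a = S a := by
  simpa [nhds_discrete, tendsto_pure] using tendsto_pi_nhds.1 h a

lemma exists_mem_eqOn_of_mem_closure {α β : Type*} [TopologicalSpace β] [DiscreteTopology β]
    {B : Set (α → β)} {S : α → β} (hS : S ∈ closure B) {s : Set α} (hs : s.Finite) :
    ∃ S' ∈ B, ∀ a ∈ s, S' a = S a :=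
  (mem_closure_iff_frequently.mp hS).and_eventually
    ((eventually_all_finite hs).2 fun a _ => eventually_apply_eq tendsto_id a) |>.exists

lemma eventually_seg_eq {ι : Type*} {l : Filter ι} {u : ι → ℕ → Bool} {f : ℕ → Bool}
    (h : Tendsto u l (𝓝 f)) (n : ℕ) : ∀ᶠ i in l, seg (u i) n = seg f n :=
  ((eventually_all_finite (Set.finite_lt_nat n)).2 fun i _ => eventually_apply_eq h i).mono
    fun _ hi => seg_eq_seg_iff.2 hi

lemma nth_eq_nth_of_forall_le_iff {p q : ℕ → Prop} (hp : {n | p n}.Infinite) {k : ℕ}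
    (h : ∀ n ≤ Nat.nth p k, q n ↔ p n) : Nat.nth q k = Nat.nth p k := by
  classical
  have hcount : Nat.count q (Nat.nth p k) = Nat.count p (Nat.nth p k) :=
    le_antisymm (Nat.count_mono_left fun n hn => (h n hn.le).1)
      (Nat.count_mono_left fun n hn => (h n hn.le).2)
  rw [Nat.count_nth_of_infinite hp] at hcount
  nth_rw 1 [← hcount]
  rw [Nat.nth_count ((h _ le_rfl).2 (Nat.nth_mem_of_infinite hp k))]

def lengthsOf (S : List Bool → Bool) (n : ℕ) : Prop := ∃ l, S l = true ∧ l.length = n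

variable {F : Set ((ℕ → Bool) × (ℕ → ℕ))} {S : List Bool → Bool}

lemma seg_mem_iff_lengthsOf {f : ℕ → Bool} (hS : ∀ l, S l = true → l = seg f l.length) (n : ℕ) :
    S (seg f n) = true ↔ lengthsOf S n :=
  ⟨fun h => ⟨_, h, seg_length f n⟩, fun ⟨l, hl, hln⟩ => hln ▸ hS l hl ▸ hl⟩

lemma lengthsOf_iff_of_eqOn {S' : List Bool → Bool} {m n : ℕ}
    (h : ∀ l : List Bool, l.length ≤ m → S' l = S l) (hn : n ≤ m) :
    lengthsOf S' n ↔ lengthsOf S n :=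
  exists_congr fun l => and_congr_left fun hl => by rw [h l (hl ▸ hn)]

lemma infinite_lengthsOf (hinj : Set.InjOn List.length {l | S l = true})
    (hinf : {l | S l = true}.Infinite) : {n | lengthsOf S n}.Infinite :=
  (hinf.image hinj).mono <| by
    rintro _ ⟨l, hl, rfl⟩
    exact ⟨l, hl, rfl⟩

-- On a branch `f`, `Enum_f(S)` enumerates the lengths of the members of `S`, independently of `f`.
lemma mem_Bset_iff : S ∈ Bset F ↔ {l | S l = true}.Infinite ∧ ∃ p ∈ F,
    (∀ l, S l = true → l = seg p.1 l.length) ∧ ∀ k, p.2 k ≤ Nat.nth (lengthsOf S) k := by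
  simp only [Bset, exists_eq_seg_iff, Prod.exists]
  refine and_congr_right fun _ => exists_congr fun f => ?_
  refine ⟨fun ⟨hS, g, hg, hgS⟩ => ⟨g, hg, hS, ?_⟩, fun ⟨g, hg, hS, hgS⟩ => ⟨hS, g, hg, ?_⟩⟩ <;>
  · have : (fun n => S (seg f n) = true) = lengthsOf S := funext fun n =>
      propext (seg_mem_iff_lengthsOf hS n)
    simpa only [this] using hgS

lemma mem_Bset_of_approx (hF : IsClosed F) (hinf : {l | S l = true}.Infinite)
    {p : ℕ → (ℕ → Bool) × (ℕ → ℕ)} (hpF : ∀ m, p m ∈ F)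
    (hbranch : ∀ m l, S l = true → l.length ≤ m → l = seg (p m).1 l.length)
    (hbound : ∀ m k, Nat.nth (lengthsOf S) k ≤ m → (p m).2 k ≤ Nat.nth (lengthsOf S) k) :
    S ∈ Bset F := by
  have hbdd : ∀ k, BddAbove (Set.range fun m => (p m).2 k) := fun k =>
    (isBoundedUnder_of_eventually_le
      (eventually_atTop.2 ⟨_, fun m hm => hbound m k hm⟩)).bddAbove_range
  choose b hb using hbdd
  obtain ⟨q, -, φ, hφ, hlim⟩ := (isCompact_univ.prod
    (isCompact_univ_pi fun k => (Set.finite_Iic (b k)).isCompact)).tendsto_subseq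
      (x := p) fun m => ⟨trivial, fun k _ => hb k ⟨m, rfl⟩⟩
  have hφ_ge : ∀ n, ∀ᶠ j in atTop, n ≤ φ j := fun n => hφ.tendsto_atTop.eventually_ge_atTop n
  refine mem_Bset_iff.2 ⟨hinf, q, hF.mem_of_tendsto hlim (Eventually.of_forall fun j => hpF _),
    fun l hl => ?_, fun k => ?_⟩
  · obtain ⟨j, hj, hseg⟩ :=
      ((hφ_ge l.length).and (eventually_seg_eq hlim.fst_nhds l.length)).exists
    exact (hbranch _ l hl hj).trans hseg
  · obtain ⟨j, hj, hg⟩ := ((hφ_ge _).and (eventually_apply_eq hlim.snd_nhds k)).exists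
    exact hg ▸ hbound _ k hj

lemma mem_Bset_of_mem_closure (hF : IsClosed F) (hS : S ∈ closure (Bset F))
    (hinf : {l | S l = true}.Infinite) : S ∈ Bset F := by
  have happrox : ∀ m, ∃ S' ∈ Bset F, ∀ l : List Bool, l.length ≤ m → S' l = S l := fun m => by
    simpa using exists_mem_eqOn_of_mem_closure hS (List.finite_length_le Bool m)
  choose S' hS'B hS'S using happrox
  choose _ p hpF hp_branch hp_bound using fun m => mem_Bset_iff.1 (hS'B m)
  have hbranch : ∀ m l, S l = true → l.length ≤ m → l = seg (p m).1 l.length :=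
    fun m l hl hlm => hp_branch m l ((hS'S m l hlm).trans hl)
  have hlen : {n | lengthsOf S n}.Infinite :=
    infinite_lengthsOf (fun l hl l' hl' h => (hbranch _ l hl le_rfl).trans
      ((congrArg (seg _) h).trans (hbranch _ l' hl' h.ge).symm)) hinf
  refine mem_Bset_of_approx hF hinf hpF hbranch fun m k hk => ?_
  rw [← nth_eq_nth_of_forall_le_iff hlen fun n hn =>
    lengthsOf_iff_of_eqOn (hS'S m) (hn.trans hk)]
  exact hp_bound m k

lemma closure_subset_genIdeal (hF : IsClosed F) :
    closure (A0 ∪ Bset F) ⊆ genIdeal (A0 ∪ Bset F) := by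
  rw [closure_union, isClosed_A0.closure_eq]
  rintro S (hS | hS)
  · exact mem_genIdeal_of_mem (Or.inl hS)
  · by_cases hfin : {l | S l = true}.Finite
    · exact mem_genIdeal_of_finite hfin
    · exact mem_genIdeal_of_mem (Or.inr (mem_Bset_of_mem_closure hF hS hfin))

end Closure

/-- For a closed `F ⊆ 2^ω × ω^ω` projecting onto `2^ω`, the ideal on `2^{<ω}` generated
by `A₀ ∪ B` is a tall `F_σ` ideal. -/
theorem genIdeal_antichains_Bset_tall_Fsigma
    (F : Set ((ℕ → Bool) × (ℕ → ℕ))) (hF : IsClosed F)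
    (hproj : ∀ f : ℕ → Bool, ∃ g : ℕ → ℕ, (f, g) ∈ F) :
    IsIdealOn (genIdeal (A0 ∪ Bset F)) ∧ IsTall (genIdeal (A0 ∪ Bset F)) ∧
      IsFsigma (genIdeal (A0 ∪ Bset F)) := by
  refine ⟨⟨fun _ _ => or_mem_genIdeal, fun _ _ => mem_genIdeal_of_imp,
    fun _ => mem_genIdeal_of_finite, univ_notMem_genIdeal F⟩, isTall_genIdeal hproj, ?_⟩
  rw [← genIdeal_eq_of_subset subset_closure (closure_subset_genIdeal hF)]
  exact isFsigma_genIdeal isClosed_closure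
end
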